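/- arXiv:2312.01391 — 2 statements merged into one kernel-verified Lean document; each statement's English description precedes it below -/
import Mathlib

section
/- For every integer d ≥ 1, integers k ≥ 1 and z ≥ 0, and every finite set P ⊆ ℝ^d, there exists a subset P' ⊆ P with |P'| ≤ (k+1)·(z+1) such that (1/3)·OPT_{k,z}(P) ≤ OPT_{k,z}(P') ≤ OPT_{k,z}(P). -/
open MeasureTheory ProbabilityTheory

/-- The distribution of a `t × d` random matrix with iid standard Gaussian `N(0,1)` entries. -/
noncomputable def gaussianMatrix (t d : ℕ) : Measure (Fin t → Fin d → ℝ) :=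
  Measure.pi fun _ => Measure.pi fun _ => gaussianReal 0 1

/-- Applying a `t × d` matrix to a vector in `ℝ^d`, yielding a vector in `ℝ^t`. -/
noncomputable def matVec {t d : ℕ} (G : Fin t → Fin d → ℝ)
    (x : EuclideanSpace ℝ (Fin d)) : EuclideanSpace ℝ (Fin t) :=
  WithLp.toLp 2 (fun i => ∑ j, G i j * x j)

/-- `OPT_{k,z}(P)`: the k-center-with-z-outliers value of `P`, i.e. the infimum over all
finite `C ⊆ ℝ^d` with `|C| = k` and all `Z ⊆ P` with `|Z| ≤ z` of
`max_{p ∈ P∖Z} dist(p, C)`. -/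
noncomputable def koutVal (d k z : ℕ) (P : Set (EuclideanSpace ℝ (Fin d))) : ℝ :=
  sInf { r | ∃ C : Finset (EuclideanSpace ℝ (Fin d)), C.card = k ∧
    ∃ Z : Finset (EuclideanSpace ℝ (Fin d)), ↑Z ⊆ P ∧ Z.card ≤ z ∧
      r = sSup ((fun p => Metric.infDist p (↑C : Set (EuclideanSpace ℝ (Fin d)))) ''
            (P \ ↑Z)) }

/-!
Farthest-first traversal picks `k + 1` points `L` of `P` that are pairwise at least `δ` apart
while every point of `P` lies within `δ` of `L`. Doing this `z + 1` times, each time on the points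
not picked yet, gives disjoint layers whose union is `P'`. Let centres `C` with `|C| = k` serve
`P' \ Z` within `b`, where `|Z| ≤ z`. Some layer misses `Z`; two of its `k + 1` points share a
nearest centre, so its `δ` is at most `2 b`, and every point of `P \ Z` is within `δ + b ≤ 3 b`
of `C`. Hence `OPT_{k,z}(P) ≤ 3 OPT_{k,z}(P')`, and `OPT_{k,z}(P') ≤ OPT_{k,z}(P)` because
`OPT_{k,z}` is monotone.
-/

open Metric

section MetricSpace

variable {E : Type*} [MetricSpace E]

noncomputable def coverRadius (C S : Set E) : ℝ :=
  sSup ((fun p => infDist p C) '' S)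

theorem coverRadius_nonneg (C S : Set E) : 0 ≤ coverRadius C S :=
  Real.sSup_nonneg (by rintro _ ⟨p, -, rfl⟩; exact infDist_nonneg)

theorem infDist_le_coverRadius {C S : Set E} {p : E} (hS : S.Finite) (hp : p ∈ S) :
    infDist p C ≤ coverRadius C S :=
  le_csSup (hS.image _).bddAbove ⟨p, hp, rfl⟩

theorem coverRadius_le {C S : Set E} {r : ℝ} (hr : 0 ≤ r) (h : ∀ p ∈ S, infDist p C ≤ r) :
    coverRadius C S ≤ r :=
  Real.sSup_le (by rintro _ ⟨p, hp, rfl⟩; exact h p hp) hr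

theorem coverRadius_mono {C S T : Set E} (hS : S.Finite) (hTS : T ⊆ S) :
    coverRadius C T ≤ coverRadius C S :=
  coverRadius_le (coverRadius_nonneg C S) fun _ hp => infDist_le_coverRadius hS (hTS hp)

/-- Farthest-first traversal: each new point is the one of `S` farthest from those chosen. -/
theorem Finset.exists_separated_net (S : Finset E) {m : ℕ} (hm : m < S.card) :
    ∃ L ⊆ S, L.card = m + 1 ∧ ∃ δ : ℝ,
      (L : Set E).Pairwise (fun a b => δ ≤ dist a b) ∧ ∀ p ∈ S, infDist p L ≤ δ := by
  classical
  induction m with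
  | zero =>
    obtain ⟨x, hx⟩ := Finset.card_pos.mp hm
    refine ⟨{x}, by simpa using hx, rfl, S.sup' ⟨x, hx⟩ (dist · x), by simp,
      fun p hp => ?_⟩
    simpa [infDist_singleton] using S.le_sup' (dist · x) hp
  | succ m ih =>
    obtain ⟨L, hLS, hLcard, δ, hsep, hcov⟩ := ih (by omega)
    have hrest : (S \ L).Nonempty := by
      rw [← Finset.card_pos, Finset.card_sdiff_of_subset hLS]; omega
    obtain ⟨f, hf, hfar⟩ := (S \ L).exists_max_image (infDist · (L : Set E)) hrest
    rw [Finset.mem_sdiff] at hf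
    have hLne : (L : Set E).Nonempty := by
      rw [Finset.coe_nonempty, ← Finset.card_pos]; omega
    refine ⟨insert f L, Finset.insert_subset hf.1 hLS,
      by rw [Finset.card_insert_of_notMem hf.2, hLcard], infDist f L, ?_, fun p hp => ?_⟩
    · rw [Finset.coe_insert, Set.pairwise_insert]
      refine ⟨hsep.mono' fun a b h => (hcov f hf.1).trans h, fun b hb _ => ?_⟩
      exact ⟨infDist_le_dist_of_mem hb, dist_comm f b ▸ infDist_le_dist_of_mem hb⟩
    · calc infDist p (insert f L : Finset E) ≤ infDist p L :=
            infDist_le_infDist_of_subset (by simp) hLne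
        _ ≤ infDist f L := by
          by_cases hpL : p ∈ L
          · rw [infDist_zero_of_mem (Finset.mem_coe.mpr hpL)]; exact infDist_nonneg
          · exact hfar p (Finset.mem_sdiff.mpr ⟨hp, hpL⟩)

/-- Pigeonhole: two of the points of `L` share a nearest centre of `C`. -/
theorem le_two_mul_of_card_lt {C L : Finset E} {δ b : ℝ} (hC : C.Nonempty)
    (hcard : C.card < L.card) (hsep : (L : Set E).Pairwise (fun a b => δ ≤ dist a b))
    (hL : ∀ q ∈ L, infDist q C ≤ b) : δ ≤ 2 * b := by
  have hnearest : ∀ q, ∃ c ∈ C, infDist q C = dist q c := fun q =>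
    C.finite_toSet.isCompact.exists_infDist_eq_dist (Finset.coe_nonempty.mpr hC) q
  choose F hFC hFdist using hnearest
  obtain ⟨x, hx, y, hy, hxy, hFxy⟩ :=
    Finset.exists_ne_map_eq_of_card_lt_of_maps_to hcard fun q _ => hFC q
  calc δ ≤ dist x y := hsep hx hy hxy
    _ ≤ dist x (F x) + dist y (F x) := dist_triangle_right _ _ _
    _ ≤ 2 * b := by
      rw [← hFdist x, hFxy, ← hFdist y]
      linarith [hL x hx, hL y hy]

theorem infDist_le_three_mul_of_card_lt {C L : Finset E} {δ b : ℝ} {p : E}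
    (hcard : C.card < L.card) (hsep : (L : Set E).Pairwise (fun a b => δ ≤ dist a b))
    (hL : ∀ q ∈ L, infDist q C ≤ b) (hp : infDist p L ≤ δ) : infDist p C ≤ 3 * b := by
  obtain ⟨q, hq⟩ := Finset.card_pos.mp (C.card.zero_le.trans_lt hcard)
  rcases C.eq_empty_or_nonempty with rfl | hC
  · simpa using infDist_nonneg.trans (hL q hq)
  obtain ⟨q', hq', hpq'⟩ :=
    L.finite_toSet.isCompact.exists_infDist_eq_dist ⟨q, hq⟩ p
  calc infDist p C ≤ infDist q' C + dist p q' := infDist_le_infDist_add_dist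
    _ ≤ b + 2 * b := by
      rw [← hpq']
      linarith [hL q' hq', le_two_mul_of_card_lt hC hcard hsep hL]
    _ = 3 * b := by ring

theorem exists_subset_infDist_le_three_mul (k n : ℕ) (P : Finset E) :
    ∃ P' ⊆ P, P'.card ≤ (k + 1) * n ∧
      ∀ C : Finset E, C.card ≤ k → ∀ Z : Finset E, Z.card < n → ∀ b : ℝ,
        (∀ q ∈ P', q ∉ Z → infDist q C ≤ b) →
          ∀ p ∈ P, p ∉ Z → infDist p C ≤ 3 * b := by
  classical
  induction n generalizing P with
  | zero => exact ⟨∅, P.empty_subset, by simp, fun _ _ _ hZ => absurd hZ (Nat.not_lt_zero _)⟩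
  | succ n ih =>
    have le_three_mul {b x : ℝ} (hx : x ≤ b) (hx0 : 0 ≤ x) : x ≤ 3 * b := by linarith
    by_cases hsmall : P.card ≤ k
    · refine ⟨P, subset_rfl, hsmall.trans (by nlinarith), fun C _ Z _ b hb p hp hpZ => ?_⟩
      exact le_three_mul (hb p hp hpZ) infDist_nonneg
    obtain ⟨L, hLP, hLcard, δ, hsep, hcov⟩ := P.exists_separated_net (not_le.mp hsmall)
    obtain ⟨P'', hP''P, hP''card, hP''⟩ := ih (P \ L)
    refine ⟨L ∪ P'', Finset.union_subset hLP (hP''P.trans Finset.sdiff_subset), ?_, ?_⟩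
    · calc (L ∪ P'').card ≤ L.card + P''.card := Finset.card_union_le _ _
        _ ≤ (k + 1) * (n + 1) := by rw [hLcard, Nat.mul_succ]; omega
    intro C hC Z hZ b hb p hp hpZ
    by_cases hLZ : Disjoint L Z
    · refine infDist_le_three_mul_of_card_lt (by omega) hsep (fun q hq => ?_) (hcov p hp)
      exact hb q (Finset.mem_union_left _ hq) (Finset.disjoint_left.mp hLZ hq)
    by_cases hpL : p ∈ L
    · exact le_three_mul (hb p (Finset.mem_union_left _ hpL) hpZ) infDist_nonneg
    have hZL : (Z \ L).card < n := by
      have := Finset.card_pos.mpr (Finset.not_disjoint_iff_nonempty_inter.mp hLZ)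
      have := Finset.card_le_card (Finset.inter_subset_right (s₁ := L) (s₂ := Z))
      rw [Finset.card_sdiff]
      omega
    refine hP'' C hC (Z \ L) hZL b (fun q hq hqZ => ?_) p (by simp [hp, hpL]) (by simp [hpZ])
    have hqL : q ∉ L := (Finset.mem_sdiff.mp (hP''P hq)).2
    exact hb q (Finset.mem_union_right _ hq) fun hqZ' => hqZ (Finset.mem_sdiff.mpr ⟨hqZ', hqL⟩)

end MetricSpace

section KCenter

variable {d k z : ℕ}

theorem koutVal_nonneg (P : Set (EuclideanSpace ℝ (Fin d))) : 0 ≤ koutVal d k z P :=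
  Real.sInf_nonneg (by rintro _ ⟨C, -, Z, -, -, rfl⟩; exact coverRadius_nonneg _ _)

theorem koutVal_le_mul {P Q : Set (EuclideanSpace ℝ (Fin d))} {c : ℝ} (hc : 0 ≤ c)
    (h : ∀ C : Finset (EuclideanSpace ℝ (Fin d)), C.card = k →
      ∀ Z : Finset (EuclideanSpace ℝ (Fin d)), ↑Z ⊆ Q → Z.card ≤ z →
        ∃ Z' : Finset (EuclideanSpace ℝ (Fin d)), ↑Z' ⊆ P ∧ Z'.card ≤ z ∧
          coverRadius (C : Set _) (P \ Z') ≤ c * coverRadius (C : Set _) (Q \ Z)) :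
    koutVal d k z P ≤ c * koutVal d k z Q := by
  by_cases hk : ∃ C : Finset (EuclideanSpace ℝ (Fin d)), C.card = k
  · obtain ⟨C₀, hC₀⟩ := hk
    rw [koutVal, koutVal, ← smul_eq_mul, ← Real.sInf_smul_of_nonneg hc]
    refine le_csInf ?_ ?_
    · exact Set.Nonempty.smul_set ⟨_, C₀, hC₀, ∅, by simp, by simp, rfl⟩
    rintro _ ⟨_, ⟨C, hC, Z, hZ, hZz, rfl⟩, rfl⟩
    obtain ⟨Z', hZ', hZ'z, hle⟩ := h C hC Z hZ hZz
    refine le_trans ?_ hle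
    refine csInf_le ⟨0, ?_⟩ ⟨C, hC, Z', hZ', hZ'z, rfl⟩
    rintro _ ⟨C, -, Z, -, -, rfl⟩
    exact coverRadius_nonneg _ _
  · -- no `k`-point set exists (`d = 0`, `k ≥ 2`): both infima are `sInf ∅ = 0`
    have hP : koutVal d k z P = 0 := by
      unfold koutVal
      convert Real.sInf_empty
      exact Set.eq_empty_of_forall_notMem fun _ ⟨C, hC, _⟩ => hk ⟨C, hC⟩
    rw [hP]
    exact mul_nonneg hc (koutVal_nonneg Q)

theorem koutVal_mono {P' P : Set (EuclideanSpace ℝ (Fin d))} (hP : P.Finite) (h : P' ⊆ P) :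
    koutVal d k z P' ≤ koutVal d k z P := by
  classical
  refine (one_mul (koutVal d k z P)) ▸ koutVal_le_mul zero_le_one fun C _ Z _ hZz => ?_
  refine ⟨Z.filter (· ∈ P'), fun x hx => (Finset.mem_filter.mp hx).2,
    (Z.card_filter_le _).trans hZz, ?_⟩
  rw [one_mul]
  exact coverRadius_mono hP.sdiff fun x hx =>
    ⟨h hx.1, fun hxZ => hx.2 (Finset.mem_filter.mpr ⟨hxZ, hx.1⟩)⟩

end KCenter

theorem witness_for_outliers_kcenter_general (d k z : ℕ)
    (P : Finset (EuclideanSpace ℝ (Fin d))) :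
    ∃ P' : Finset (EuclideanSpace ℝ (Fin d)), P' ⊆ P ∧ P'.card ≤ (k + 1) * (z + 1) ∧
      (1 / 3 : ℝ) * koutVal d k z ↑P ≤ koutVal d k z ↑P' ∧
      koutVal d k z ↑P' ≤ koutVal d k z ↑P := by
  obtain ⟨P', hP'P, hcard, hP'⟩ := exists_subset_infDist_le_three_mul k (z + 1) P
  have hsub : (P' : Set (EuclideanSpace ℝ (Fin d))) ⊆ P := Finset.coe_subset.mpr hP'P
  refine ⟨P', hP'P, hcard, ?_, koutVal_mono P.finite_toSet hsub⟩
  suffices koutVal d k z ↑P ≤ 3 * koutVal d k z ↑P' by linarith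
  refine koutVal_le_mul (by norm_num) fun C hC Z hZ hZz => ⟨Z, hZ.trans hsub, hZz, ?_⟩
  refine coverRadius_le (mul_nonneg (by norm_num) (coverRadius_nonneg _ _)) fun p hp => ?_
  refine hP' C hC.le Z (Nat.lt_succ_of_le hZz) _ (fun q hq hqZ => ?_) p hp.1 hp.2
  exact infDist_le_coverRadius P'.finite_toSet.sdiff ⟨hq, hqZ⟩

/-- Witness for the outliers variant. For every `d, k ≥ 1`, `z ≥ 0`, and
finite `P ⊆ ℝ^d`, there is a subset `P' ⊆ P` of size at most `(k+1)(z+1)` with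
`(1/3)·OPT_{k,z}(P) ≤ OPT_{k,z}(P') ≤ OPT_{k,z}(P)`. -/
theorem witness_for_outliers_kcenter (d k z : ℕ) (hd : 0 < d) (hk : 0 < k)
    (P : Finset (EuclideanSpace ℝ (Fin d))) :
    ∃ P' : Finset (EuclideanSpace ℝ (Fin d)), P' ⊆ P ∧ P'.card ≤ (k + 1) * (z + 1) ∧
      (1 / 3 : ℝ) * koutVal d k z ↑P ≤ koutVal d k z ↑P' ∧
      koutVal d k z ↑P' ≤ koutVal d k z ↑P :=
  witness_for_outliers_kcenter_general d k z P
end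

section
/- Let d, k be positive integers, α ≥ 1 a real number, and P ⊆ ℝ^d a finite nonempty set. Suppose s₁, …, s_{k+1} ∈ P are points such that for every i ∈ {2, …, k+1}, min_{1 ≤ j < i} ‖s_i − s_j‖ ≥ (1/α)·max_{p ∈ P} min_{1 ≤ j < i} ‖p − s_j‖ (i.e., each s_i is an α-approximate furthest point from {s₁, …, s_{i−1}} in P). Let D = min_{1 ≤ j < i ≤ k+1} ‖s_i − s_j‖. Then OPT_k(P) ≤ α·D ≤ 2α·OPT_k(P). -/
/-!
The first `k` chosen points are a set of `k` centers, and every point of `P` lies within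
`R := max_{p ∈ P} min_{j < k} ‖p - s j‖` of them, so `OPT_k(P) ≤ R`. Adding centers only
shrinks the distance to the nearest one, so `R` is at most the radius seen when `s i` is chosen,
which by `α`-approximation is at most `α ‖s i - s j‖` for every `j < i`; hence `R ≤ α D`.
Conversely, any `k` centers have a common nearest center for two of the `k + 1` points `s i`,
and the triangle inequality through it gives `D ≤ 2 OPT_k(P)`.
-/

/-- `max_{p ∈ P} dist(p, C)`, the k-center cost of a center set `C` for a pointset `P`. -/
noncomputable def kcost (d : ℕ) (P C : Set (EuclideanSpace ℝ (Fin d))) : ℝ :=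
  sSup ((fun p => Metric.infDist p C) '' P)

/-- `OPT_k(P)`: the k-center value of `P`, i.e. the infimum over all finite `C ⊆ ℝ^d` with
`|C| = k` of `max_{p ∈ P} dist(p, C)`. -/
noncomputable def kcenter (d k : ℕ) (P : Set (EuclideanSpace ℝ (Fin d))) : ℝ :=
  sInf { r | ∃ C : Finset (EuclideanSpace ℝ (Fin d)), C.card = k ∧ r = kcost d P ↑C }

open Metric

section FinsetImage

variable {X : Type*} {P : Finset X}

lemma le_sSup_image_finset (f : X → ℝ) {p : X} (hp : p ∈ P) :
    f p ≤ sSup (f '' P) :=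
  le_csSup (P.finite_toSet.image f).bddAbove (Set.mem_image_of_mem f hp)

lemma sSup_image_finset_le_sSup_image {f g : X → ℝ} (hg : ∀ p, 0 ≤ g p)
    (hfg : ∀ p ∈ P, f p ≤ g p) : sSup (f '' P) ≤ sSup (g '' P) :=
  Real.sSup_le (by rintro _ ⟨p, hp, rfl⟩; exact (hfg p hp).trans (le_sSup_image_finset g hp))
    (Real.sSup_nonneg (by rintro _ ⟨p, -, rfl⟩; exact hg p))

end FinsetImage

section PseudoMetricSpace

variable {X ι : Type*} [PseudoMetricSpace X]

/-- This is `0` when no index precedes `i`. -/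
noncomputable def prefixDist [LT ι] (s : ι → X) (i : ι) (p : X) : ℝ :=
  ⨅ j : {j : ι // j < i}, dist p (s j)

noncomputable def minPairDist [LT ι] (s : ι → X) : ℝ :=
  ⨅ q : {q : ι × ι // q.2 < q.1}, dist (s q.1.1) (s q.1.2)

section LinearOrder

variable [LinearOrder ι] {s : ι → X} {i j : ι} {p : X}

lemma prefixDist_nonneg : 0 ≤ prefixDist s i p :=
  Real.iInf_nonneg fun _ => dist_nonneg

lemma prefixDist_le_dist (hji : j < i) : prefixDist s i p ≤ dist p (s j) :=
  ciInf_le ⟨0, by rintro _ ⟨_, rfl⟩; exact dist_nonneg⟩ (⟨j, hji⟩ : {j // j < i})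

lemma prefixDist_anti {i' : ι} (hii' : i ≤ i') (hi : ∃ j, j < i) :
    prefixDist s i' p ≤ prefixDist s i p :=
  have : Nonempty {j // j < i} := let ⟨j, hj⟩ := hi; ⟨⟨j, hj⟩⟩
  le_ciInf fun j => prefixDist_le_dist (j.2.trans_le hii')

lemma infDist_image_Iio_le_prefixDist [DecidableEq X] [LocallyFiniteOrderBot ι]
    (hi : ∃ j, j < i) :
    infDist p ((Finset.Iio i).image s : Set X) ≤ prefixDist s i p :=
  have : Nonempty {j // j < i} := let ⟨j, hj⟩ := hi; ⟨⟨j, hj⟩⟩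
  le_ciInf fun j => infDist_le_dist_of_mem (by simpa using ⟨j, j.2, rfl⟩)

lemma minPairDist_le_dist (hji : j < i) : minPairDist s ≤ dist (s i) (s j) :=
  ciInf_le (f := fun q : {q : ι × ι // q.2 < q.1} => dist (s q.1.1) (s q.1.2))
    ⟨0, by rintro _ ⟨_, rfl⟩; exact dist_nonneg⟩ ⟨(i, j), hji⟩

lemma minPairDist_le_dist_of_ne (hij : i ≠ j) : minPairDist s ≤ dist (s i) (s j) := by
  rcases hij.lt_or_gt with h | h
  · exact (minPairDist_le_dist h).trans_eq (dist_comm _ _)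
  · exact minPairDist_le_dist h

end LinearOrder

lemma sSup_prefixDist_last_le_mul_minPairDist {k : ℕ} (hk : 0 < k) {α : ℝ} (hα : 0 < α)
    {P : Finset X} {s : Fin (k + 1) → X}
    (happrox : ∀ i : Fin (k + 1), i ≠ 0 →
      1 / α * sSup (prefixDist s i '' P) ≤ prefixDist s i (s i)) :
    sSup (prefixDist s (Fin.last k) '' P) ≤ α * minPairDist s := by
  have : NeZero k := ⟨hk.ne'⟩
  have : Nonempty {q : Fin (k + 1) × Fin (k + 1) // q.2 < q.1} :=
    ⟨⟨(Fin.last k, 0), Fin.last_pos'⟩⟩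
  rw [← div_le_iff₀' hα]
  refine le_ciInf fun ⟨(i, j), hji⟩ => ?_
  have hi : i ≠ 0 := (hji.trans_le' (Fin.zero_le j)).ne'
  calc sSup (prefixDist s (Fin.last k) '' P) / α
      ≤ 1 / α * sSup (prefixDist s i '' P) := by
        rw [div_eq_inv_mul, one_div]
        refine mul_le_mul_of_nonneg_left ?_ (inv_nonneg.mpr hα.le)
        exact sSup_image_finset_le_sSup_image (fun _ => prefixDist_nonneg)
          fun _ _ => prefixDist_anti (Fin.le_last i) ⟨0, Fin.pos_of_ne_zero hi⟩
    _ ≤ prefixDist s i (s i) := happrox i hi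
    _ ≤ dist (s i) (s j) := prefixDist_le_dist hji

/-- Pigeonhole: two of the points share a nearest center. -/
lemma exists_ne_dist_le_infDist_add_infDist [Fintype ι] {C : Finset X} (hC : C.Nonempty)
    (s : ι → X) (hcard : C.card < Fintype.card ι) :
    ∃ i j, i ≠ j ∧
      dist (s i) (s j) ≤ infDist (s i) (C : Set X) + infDist (s j) (C : Set X) := by
  choose c hcC hc using fun i =>
    C.finite_toSet.isCompact.exists_infDist_eq_dist (Finset.coe_nonempty.mpr hC) (s i)
  obtain ⟨i, -, j, -, hij, hcij⟩ :=
    Finset.exists_ne_map_eq_of_card_lt_of_maps_to (s := Finset.univ) (t := C) hcard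
      fun i _ => hcC i
  refine ⟨i, j, hij, ?_⟩
  rw [hc i, hc j, hcij, dist_comm (s j)]
  exact dist_triangle _ _ _

end PseudoMetricSpace

section KCenter

variable {d k : ℕ} {P : Finset (EuclideanSpace ℝ (Fin d))}

lemma kcost_nonneg (C : Set (EuclideanSpace ℝ (Fin d))) : 0 ≤ kcost d P C :=
  Real.sSup_nonneg (by rintro _ ⟨p, -, rfl⟩; exact infDist_nonneg)

lemma infDist_le_kcost (C : Set (EuclideanSpace ℝ (Fin d))) {p : EuclideanSpace ℝ (Fin d)}
    (hp : p ∈ P) : infDist p C ≤ kcost d P C :=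
  le_sSup_image_finset (infDist · C) hp

lemma kcost_anti {C C' : Set (EuclideanSpace ℝ (Fin d))} (hC : C.Nonempty) (hCC' : C ⊆ C') :
    kcost d P C' ≤ kcost d P C :=
  sSup_image_finset_le_sSup_image (fun _ => infDist_nonneg)
    fun _ _ => infDist_le_infDist_of_subset hCC' hC

lemma kcenter_le_kcost {C : Finset (EuclideanSpace ℝ (Fin d))} (hC : C.card = k) :
    kcenter d k P ≤ kcost d P C :=
  csInf_le ⟨0, by rintro _ ⟨C, -, rfl⟩; exact kcost_nonneg _⟩ ⟨C, hC, rfl⟩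

lemma kcenter_le_kcost_of_card_le (hd : 0 < d) {C : Finset (EuclideanSpace ℝ (Fin d))}
    (hC : C.Nonempty) (hCk : C.card ≤ k) : kcenter d k P ≤ kcost d P C := by
  have : Nonempty (Fin d) := ⟨⟨0, hd⟩⟩
  obtain ⟨C', hCC', hC'⟩ := Infinite.exists_superset_card_eq C k hCk
  exact (kcenter_le_kcost hC').trans (kcost_anti (Finset.coe_nonempty.mpr hC) hCC')

lemma kcenter_le_sSup_prefixDist_last (hd : 0 < d) (hk : 0 < k)
    (s : Fin (k + 1) → EuclideanSpace ℝ (Fin d)) :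
    kcenter d k P ≤ sSup (prefixDist s (Fin.last k) '' P) := by
  classical
  have : NeZero k := ⟨hk.ne'⟩
  have hlast : ∃ j, j < Fin.last k := ⟨0, Fin.last_pos'⟩
  refine (kcenter_le_kcost_of_card_le hd (C := (Finset.Iio (Fin.last k)).image s)
    ((Finset.nonempty_Iio.mpr (not_isMin_iff.mpr hlast)).image s) ?_).trans ?_
  · exact Finset.card_image_le.trans (by simp)
  · exact sSup_image_finset_le_sSup_image (fun _ => prefixDist_nonneg)
      fun _ _ => infDist_image_Iio_le_prefixDist hlast

lemma minPairDist_le_two_mul_kcost (hk : 0 < k) {s : Fin (k + 1) → EuclideanSpace ℝ (Fin d)}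
    (hsP : ∀ i, s i ∈ P) {C : Finset (EuclideanSpace ℝ (Fin d))} (hC : C.card = k) :
    minPairDist s ≤ 2 * kcost d P C := by
  obtain ⟨i, j, hij, hdist⟩ :=
    exists_ne_dist_le_infDist_add_infDist (C.card_pos.mp (hC ▸ hk)) s (by simp [hC])
  calc minPairDist s ≤ dist (s i) (s j) := minPairDist_le_dist_of_ne hij
    _ ≤ infDist (s i) C + infDist (s j) C := hdist
    _ ≤ kcost d P C + kcost d P C :=
      add_le_add (infDist_le_kcost _ (hsP i)) (infDist_le_kcost _ (hsP j))
    _ = 2 * kcost d P C := (two_mul _).symm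

lemma minPairDist_le_two_mul_kcenter (hd : 0 < d) (hk : 0 < k)
    {s : Fin (k + 1) → EuclideanSpace ℝ (Fin d)} (hsP : ∀ i, s i ∈ P) :
    minPairDist s ≤ 2 * kcenter d k P := by
  have : Nonempty (Fin d) := ⟨⟨0, hd⟩⟩
  obtain ⟨C, hC⟩ := Infinite.exists_subset_card_eq (EuclideanSpace ℝ (Fin d)) k
  rw [← div_le_iff₀' two_pos]
  refine le_csInf ⟨_, C, hC, rfl⟩ ?_
  rintro _ ⟨C, hC, rfl⟩
  exact (div_le_iff₀' two_pos).mpr (minPairDist_le_two_mul_kcost hk hsP hC)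

end KCenter

theorem relaxed_gonzalez_general (d k : ℕ) (hd : 0 < d) (hk : 0 < k)
    (α : ℝ) (hα : 1 ≤ α)
    (P : Finset (EuclideanSpace ℝ (Fin d)))
    (s : Fin (k + 1) → EuclideanSpace ℝ (Fin d)) (hsP : ∀ i, s i ∈ P)
    (happrox : ∀ i : Fin (k + 1), i ≠ 0 →
      (1 / α) * sSup ((fun p => ⨅ j : {j : Fin (k + 1) // j < i}, ‖p - s j.val‖) ''
          (↑P : Set (EuclideanSpace ℝ (Fin d)))) ≤
        ⨅ j : {j : Fin (k + 1) // j < i}, ‖s i - s j.val‖)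
    (D : ℝ)
    (hD : D = ⨅ q : {q : Fin (k + 1) × Fin (k + 1) // q.2 < q.1},
      ‖s q.val.1 - s q.val.2‖) :
    kcenter d k ↑P ≤ α * D ∧ α * D ≤ 2 * α * kcenter d k ↑P := by
  have hα0 : 0 < α := zero_lt_one.trans_le hα
  simp only [← dist_eq_norm] at happrox hD
  obtain rfl : D = minPairDist s := hD
  constructor
  · exact (kcenter_le_sSup_prefixDist_last hd hk s).trans
      (sSup_prefixDist_last_le_mul_minPairDist hk hα0 happrox)
  · calc α * minPairDist s ≤ α * (2 * kcenter d k P) :=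
          mul_le_mul_of_nonneg_left (minPairDist_le_two_mul_kcenter hd hk hsP) hα0.le
      _ = 2 * α * kcenter d k P := by ring

/-- Relaxed Gonzalez. If `s 0, …, s k ∈ P` are such that each `s i`
(`i ≠ 0`) is an `α`-approximate furthest point in `P` from `{s 0, …, s (i-1)}`, and `D` is
the minimum pairwise distance among the `s i`, then `OPT_k(P) ≤ α·D ≤ 2α·OPT_k(P)`. -/
theorem relaxed_gonzalez (d k : ℕ) (hd : 0 < d) (hk : 0 < k)
    (α : ℝ) (hα : 1 ≤ α)
    (P : Finset (EuclideanSpace ℝ (Fin d))) (hP : P.Nonempty)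
    (s : Fin (k + 1) → EuclideanSpace ℝ (Fin d)) (hsP : ∀ i, s i ∈ P)
    (happrox : ∀ i : Fin (k + 1), i ≠ 0 →
      (1 / α) * sSup ((fun p => ⨅ j : {j : Fin (k + 1) // j < i}, ‖p - s j.val‖) ''
          (↑P : Set (EuclideanSpace ℝ (Fin d)))) ≤
        ⨅ j : {j : Fin (k + 1) // j < i}, ‖s i - s j.val‖)
    (D : ℝ)
    (hD : D = ⨅ q : {q : Fin (k + 1) × Fin (k + 1) // q.2 < q.1},
      ‖s q.val.1 - s q.val.2‖) :
    kcenter d k ↑P ≤ α * D ∧ α * D ≤ 2 * α * kcenter d k ↑P :=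
  relaxed_gonzalez_general d k hd hk α hα P s hsP happrox D hD
end
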